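/- If A ∈ SL(3,ℍ) is conjugate in SL(3,ℍ) to the diagonal matrix diag(e^{iθ}, e^{iφ}, e^{iψ}) with θ, φ, ψ ∈ [0,π] (complex entries viewed in ℍ), then A can be written as a product of 3 simple matrices in SL(3,ℍ). -/

import Mathlib

noncomputable section

open Matrix Polynomial

abbrev M3H := Matrix (Fin 3) (Fin 3) (Quaternion ℝ)
abbrev M6C := Matrix (Fin 3 ⊕ Fin 3) (Fin 3 ⊕ Fin 3) ℂ

/-- First complex component: for `q = z + w·j`, this is `z`. -/
def q1 : Quaternion ℝ →+ ℂ where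
  toFun q := ⟨q.re, q.imI⟩
  map_zero' := by apply Complex.ext <;> simp [Quaternion.re_zero, Quaternion.imI_zero, Quaternion.imJ_zero, Quaternion.imK_zero, Quaternion.re_one, Quaternion.imI_one, Quaternion.imJ_one, Quaternion.imK_one]
  map_add' p q := by apply Complex.ext <;> simp

/-- Second complex component: for `q = z + w·j`, this is `w`. -/
def q2 : Quaternion ℝ →+ ℂ where
  toFun q := ⟨q.imJ, q.imK⟩
  map_zero' := by apply Complex.ext <;> simp [Quaternion.re_zero, Quaternion.imI_zero, Quaternion.imJ_zero, Quaternion.imK_zero, Quaternion.re_one, Quaternion.imI_one, Quaternion.imJ_one, Quaternion.imK_one]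
  map_add' p q := by apply Complex.ext <;> simp

@[simp] lemma q1_apply (q : Quaternion ℝ) : q1 q = ⟨q.re, q.imI⟩ := rfl
@[simp] lemma q2_apply (q : Quaternion ℝ) : q2 q = ⟨q.imJ, q.imK⟩ := rfl

lemma q1_mul (p q : Quaternion ℝ) :
    q1 (p * q) = q1 p * q1 q - q2 p * star (q2 q) := by
  apply Complex.ext <;>
    simp [Complex.ext_iff, Complex.mul_re, Complex.mul_im, Quaternion.re_mul,
      Quaternion.imI_mul, Quaternion.imJ_mul, Quaternion.imK_mul] <;> ring

lemma q2_mul (p q : Quaternion ℝ) :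
    q2 (p * q) = q1 p * q2 q + q2 p * star (q1 q) := by
  apply Complex.ext <;>
    simp [Complex.ext_iff, Complex.mul_re, Complex.mul_im, Quaternion.re_mul,
      Quaternion.imI_mul, Quaternion.imJ_mul, Quaternion.imK_mul] <;> ring

lemma q1_one : q1 1 = 1 := by apply Complex.ext <;> simp [Quaternion.re_zero, Quaternion.imI_zero, Quaternion.imJ_zero, Quaternion.imK_zero, Quaternion.re_one, Quaternion.imI_one, Quaternion.imJ_one, Quaternion.imK_one]
lemma q2_one : q2 (1 : Quaternion ℝ) = 0 := by apply Complex.ext <;> simp [Quaternion.re_zero, Quaternion.imI_zero, Quaternion.imJ_zero, Quaternion.imK_zero, Quaternion.re_one, Quaternion.imI_one, Quaternion.imJ_one, Quaternion.imK_one]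

lemma sq1_mul (p q : Quaternion ℝ) :
    star (q1 (p * q)) = star (q1 p) * star (q1 q) - star (q2 p) * q2 q := by
  rw [q1_mul, star_sub, star_mul', star_mul', star_star]

lemma sq2_mul (p q : Quaternion ℝ) :
    star (q2 (p * q)) = star (q1 p) * star (q2 q) + star (q2 p) * q1 q := by
  rw [q2_mul, star_add, star_mul', star_mul', star_star]

/-- The complex adjoint `Φ(A)` of a quaternionic matrix `A = A₁ + A₂·j`:
the block matrix `[[A₁, A₂], [-conj A₂, conj A₁]]`. -/
def Phi (A : M3H) : M6C :=
  fromBlocks (A.map q1) (A.map q2)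
    (-(A.map fun x => star (q2 x))) (A.map fun x => star (q1 x))

lemma Phi_mul (A B : M3H) : Phi (A * B) = Phi A * Phi B := by
  rw [Phi, Phi, Phi, Matrix.fromBlocks_multiply]
  have h11 : (A * B).map q1
      = A.map q1 * B.map q1 + A.map q2 * (-(B.map fun x => star (q2 x))) := by
    ext i j
    simp only [Matrix.map_apply, Matrix.mul_apply, Matrix.add_apply, Matrix.neg_apply]
    rw [map_sum, ← Finset.sum_add_distrib]
    refine Finset.sum_congr rfl fun k _ => ?_
    rw [q1_mul]; ring
  have h12 : (A * B).map q2
      = A.map q1 * B.map q2 + A.map q2 * (B.map fun x => star (q1 x)) := by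
    ext i j
    simp only [Matrix.map_apply, Matrix.mul_apply, Matrix.add_apply]
    rw [map_sum, ← Finset.sum_add_distrib]
    refine Finset.sum_congr rfl fun k _ => ?_
    rw [q2_mul]
  have h21 : (-(A * B).map fun x => star (q2 x))
      = (-(A.map fun x => star (q2 x))) * B.map q1
        + (A.map fun x => star (q1 x)) * (-(B.map fun x => star (q2 x))) := by
    ext i j
    simp only [Matrix.map_apply, Matrix.mul_apply, Matrix.add_apply, Matrix.neg_apply]
    rw [map_sum, star_sum, ← Finset.sum_add_distrib, ← Finset.sum_neg_distrib]
    refine Finset.sum_congr rfl fun k _ => ?_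
    rw [sq2_mul]; ring
  have h22 : ((A * B).map fun x => star (q1 x))
      = (-(A.map fun x => star (q2 x))) * B.map q2
        + (A.map fun x => star (q1 x)) * (B.map fun x => star (q1 x)) := by
    ext i j
    simp only [Matrix.map_apply, Matrix.mul_apply, Matrix.add_apply, Matrix.neg_apply]
    rw [map_sum, star_sum, ← Finset.sum_add_distrib]
    refine Finset.sum_congr rfl fun k _ => ?_
    rw [sq1_mul]; ring
  rw [h11, h12, h21, h22]

lemma Phi_one : Phi (1 : M3H) = 1 := by
  have h1 : (1 : M3H).map q1 = 1 := by
    ext i j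
    by_cases h : i = j <;> simp [Matrix.map_apply, Matrix.one_apply, h, Complex.ext_iff,
      Quaternion.re_zero, Quaternion.imI_zero, Quaternion.imJ_zero, Quaternion.imK_zero, Quaternion.re_one, Quaternion.imI_one, Quaternion.imJ_one, Quaternion.imK_one]
  have h2 : (1 : M3H).map q2 = 0 := by
    ext i j
    by_cases h : i = j <;> simp [Matrix.map_apply, Matrix.one_apply, h, Complex.ext_iff,
      Quaternion.re_zero, Quaternion.imI_zero, Quaternion.imJ_zero, Quaternion.imK_zero, Quaternion.re_one, Quaternion.imI_one, Quaternion.imJ_one, Quaternion.imK_one]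
  have h3 : ((1 : M3H).map fun x => star (q2 x)) = 0 := by
    ext i j
    by_cases h : i = j <;> simp [Matrix.map_apply, Matrix.one_apply, h, Complex.ext_iff,
      Quaternion.re_zero, Quaternion.imI_zero, Quaternion.imJ_zero, Quaternion.imK_zero, Quaternion.re_one, Quaternion.imI_one, Quaternion.imJ_one, Quaternion.imK_one]
  have h4 : ((1 : M3H).map fun x => star (q1 x)) = 1 := by
    ext i j
    by_cases h : i = j <;> simp [Matrix.map_apply, Matrix.one_apply, h, Complex.ext_iff,
      Quaternion.re_zero, Quaternion.imI_zero, Quaternion.imJ_zero, Quaternion.imK_zero, Quaternion.re_one, Quaternion.imI_one, Quaternion.imJ_one, Quaternion.imK_one]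
  rw [Phi, h1, h2, h3, h4, neg_zero, Matrix.fromBlocks_one]

lemma Phi_zero : Phi (0 : M3H) = 0 := by
  have h1 : (0 : M3H).map q1 = 0 := by ext i j; simp [Complex.ext_iff,
    Quaternion.re_zero, Quaternion.imI_zero, Quaternion.imJ_zero, Quaternion.imK_zero, Quaternion.re_one, Quaternion.imI_one, Quaternion.imJ_one, Quaternion.imK_one]
  have h2 : (0 : M3H).map q2 = 0 := by ext i j; simp [Complex.ext_iff,
    Quaternion.re_zero, Quaternion.imI_zero, Quaternion.imJ_zero, Quaternion.imK_zero, Quaternion.re_one, Quaternion.imI_one, Quaternion.imJ_one, Quaternion.imK_one]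
  have h3 : ((0 : M3H).map fun x => star (q2 x)) = 0 := by ext i j; simp [Complex.ext_iff,
    Quaternion.re_zero, Quaternion.imI_zero, Quaternion.imJ_zero, Quaternion.imK_zero, Quaternion.re_one, Quaternion.imI_one, Quaternion.imJ_one, Quaternion.imK_one]
  have h4 : ((0 : M3H).map fun x => star (q1 x)) = 0 := by ext i j; simp [Complex.ext_iff,
    Quaternion.re_zero, Quaternion.imI_zero, Quaternion.imJ_zero, Quaternion.imK_zero, Quaternion.re_one, Quaternion.imI_one, Quaternion.imJ_one, Quaternion.imK_one]
  rw [Phi, h1, h2, h3, h4, neg_zero, Matrix.fromBlocks_zero]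

lemma Phi_add (A B : M3H) : Phi (A + B) = Phi A + Phi B := by
  have h1 : (A + B).map q1 = A.map q1 + B.map q1 := by ext i j; simp [Complex.ext_iff]
  have h2 : (A + B).map q2 = A.map q2 + B.map q2 := by ext i j; simp [Complex.ext_iff]
  have h3 : ((A + B).map fun x => star (q2 x))
      = (A.map fun x => star (q2 x)) + (B.map fun x => star (q2 x)) := by
    ext i j; simp [Complex.ext_iff]; ring
  have h4 : ((A + B).map fun x => star (q1 x))
      = (A.map fun x => star (q1 x)) + (B.map fun x => star (q1 x)) := by
    ext i j; simp [Complex.ext_iff]; ring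
  rw [Phi, Phi, Phi, h1, h2, h3, h4, neg_add, Matrix.fromBlocks_add]

/-- `Φ` as a ring homomorphism `M(3,ℍ) →+* M(6,ℂ)`. -/
def PhiHom : M3H →+* M6C where
  toFun := Phi
  map_one' := Phi_one
  map_mul' := Phi_mul
  map_zero' := Phi_zero
  map_add' := Phi_add

/-- The quaternionic determinant `det_ℍ(A) := det (Φ A)`. -/
def detH (A : M3H) : ℂ := (Phi A).det

/-- `SL(3,ℍ)`: the invertible quaternionic `3×3` matrices with `det_ℍ = 1`,
as a subgroup of the unit group of the matrix ring. -/
def SL3H : Subgroup (M3H)ˣ :=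
  MonoidHom.ker (Matrix.detMonoidHom.comp (PhiHom.toMonoidHom.comp (Units.coeHom M3H)))

@[simp] lemma PhiHom_apply (A : M3H) : PhiHom A = Phi A := rfl

lemma mem_SL3H {A : (M3H)ˣ} : A ∈ SL3H ↔ detH A.val = 1 := by
  simp [SL3H, MonoidHom.mem_ker, detH]

/-- The underlying quaternionic matrix of an element of `SL(3,ℍ)`. -/
def mat (A : SL3H) : M3H := A.val.val

/-- `e^{iθ} = cos θ + i sin θ` as a quaternion. -/
def eI (θ : ℝ) : Quaternion ℝ := ⟨Real.cos θ, Real.sin θ, 0, 0⟩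

/-- A quaternionic matrix is real if each entry lies in `ℝ ⊂ ℍ`. -/
def IsRealMatrix (B : M3H) : Prop := ∀ i j, ∃ r : ℝ, B i j = (r : Quaternion ℝ)

/-- A *simple* element of `SL(3,ℍ)`: an element conjugate in `SL(3,ℍ)` to a matrix
with all entries real. -/
def IsSimple (g : SL3H) : Prop := ∃ h : SL3H, IsRealMatrix (mat (h * g * h⁻¹))

open scoped Quaternion

@[simp] lemma eI_re (θ : ℝ) : (eI θ).re = Real.cos θ := rfl
@[simp] lemma eI_imI (θ : ℝ) : (eI θ).imI = Real.sin θ := rfl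
@[simp] lemma eI_imJ (θ : ℝ) : (eI θ).imJ = 0 := rfl
@[simp] lemma eI_imK (θ : ℝ) : (eI θ).imK = 0 := rfl

lemma eI_mul (a b : ℝ) : eI a * eI b = eI (a+b) := by
  ext <;> simp [Quaternion.re_mul, Quaternion.imI_mul, Quaternion.imJ_mul, Quaternion.imK_mul,
    Real.cos_add, Real.sin_add] <;> ring

lemma eI_zero : eI 0 = 1 := by
  ext <;> simp

def eD (a b c : ℝ) : M3H := Matrix.diagonal ![eI a, eI b, eI c]

lemma eD_mul (a b c a' b' c' : ℝ) : eD a b c * eD a' b' c' = eD (a+a') (b+b') (c+c') := by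
  unfold eD
  rw [Matrix.diagonal_mul_diagonal]
  have : (fun i => ![eI a, eI b, eI c] i * ![eI a', eI b', eI c'] i)
      = ![eI (a+a'), eI (b+b'), eI (c+c')] := by
    funext i; fin_cases i <;> simp [eI_mul]
  rw [this]

lemma eD_zero : eD 0 0 0 = 1 := by
  unfold eD
  have : ![eI 0, eI 0, eI 0] = (fun _ => (1 : Quaternion ℝ)) := by
    funext i; fin_cases i <;> simp [eI_zero]
  rw [this, Matrix.diagonal_one]
lemma detH_eD (a b c : ℝ) : detH (eD a b c) = 1 := by
  unfold detH Phi eD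
  rw [Matrix.diagonal_map (map_zero q1), Matrix.diagonal_map (map_zero q2),
      Matrix.diagonal_map (by rw [map_zero, star_zero]),
      Matrix.diagonal_map (by rw [map_zero, star_zero])]
  have hq2 : Matrix.diagonal (fun i => q2 (![eI a, eI b, eI c] i)) = 0 := by
    have : (fun i => q2 (![eI a, eI b, eI c] i)) = fun _ => (0:ℂ) := by
      funext i; fin_cases i <;> simp [Complex.ext_iff]
    rw [this, Matrix.diagonal_zero]
  have hq2' : Matrix.diagonal (fun i => star (q2 (![eI a, eI b, eI c] i))) = 0 := by
    have : (fun i => star (q2 (![eI a, eI b, eI c] i))) = fun _ => (0:ℂ) := by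
      funext i; fin_cases i <;> simp [Complex.ext_iff]
    rw [this, Matrix.diagonal_zero]
  rw [hq2, hq2', neg_zero, Matrix.det_fromBlocks_zero₂₁, Matrix.det_diagonal,
      Matrix.det_diagonal, Fin.prod_univ_three, Fin.prod_univ_three]
  simp only [Matrix.cons_val_zero, Matrix.cons_val_one, Matrix.head_cons,
    Matrix.cons_val_two, Matrix.tail_cons]
  simp [Complex.ext_iff, Complex.mul_re, Complex.mul_im]
  constructor
  · ring_nf
    linear_combination (Real.cos b^2*Real.cos c^2 + Real.cos b^2*Real.sin c^2
        + Real.sin b^2*Real.cos c^2 + Real.sin b^2*Real.sin c^2) * Real.sin_sq_add_cos_sq a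
      + (Real.cos c^2 + Real.sin c^2) * Real.sin_sq_add_cos_sq b + Real.sin_sq_add_cos_sq c
  · ring_nf
/-- Constructor for SL3H elements. -/
def mkSL (Am Ai : M3H) (h1 : Am * Ai = 1) (h2 : Ai * Am = 1) (hd : detH Am = 1) : SL3H :=
  ⟨⟨Am, Ai, h1, h2⟩, mem_SL3H.mpr hd⟩

@[simp] lemma mat_mkSL (Am Ai : M3H) (h1 h2 hd) : mat (mkSL Am Ai h1 h2 hd) = Am := rfl
@[simp] lemma mat_mul (x y : SL3H) : mat (x * y) = mat x * mat y := rfl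
@[simp] lemma mat_inv_mkSL (Am Ai : M3H) (h1 h2 hd) : mat (mkSL Am Ai h1 h2 hd)⁻¹ = Ai := rfl

lemma isSimple_conj (g k : SL3H) (h : IsSimple g) : IsSimple (k * g * k⁻¹) := by
  obtain ⟨w, hw⟩ := h
  refine ⟨w * k⁻¹, ?_⟩
  have : w * k⁻¹ * (k * g * k⁻¹) * (w * k⁻¹)⁻¹ = w * g * w⁻¹ := by group
  rw [this]; exact hw

lemma eD_inv_right (a b c : ℝ) : eD a b c * eD (-a) (-b) (-c) = 1 := by
  rw [eD_mul]; simp [eD_zero]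

def E (a b c : ℝ) : SL3H :=
  mkSL (eD a b c) (eD (-a) (-b) (-c)) (eD_inv_right a b c)
    (by rw [show eD (-a) (-b) (-c) * eD a b c = eD a b c * eD (-a) (-b) (-c) by
          rw [eD_mul, eD_mul]; ring_nf]; exact eD_inv_right a b c)
    (detH_eD a b c)

lemma E_mul (a b c a' b' c' : ℝ) : E a b c * E a' b' c' = E (a+a') (b+b') (c+c') :=
  Subtype.ext (Units.ext (eD_mul a b c a' b' c'))
def qj : Quaternion ℝ := ⟨0,0,1,0⟩
def sR : ℝ := (Real.sqrt 2)⁻¹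
def sQ : Quaternion ℝ := ⟨sR,0,0,0⟩
def siQ : Quaternion ℝ := ⟨0,sR,0,0⟩
@[simp] lemma qj_re : qj.re = 0 := rfl
@[simp] lemma qj_imI : qj.imI = 0 := rfl
@[simp] lemma qj_imJ : qj.imJ = 1 := rfl
@[simp] lemma qj_imK : qj.imK = 0 := rfl
@[simp] lemma sQ_re : sQ.re = sR := rfl
@[simp] lemma sQ_imI : sQ.imI = 0 := rfl
@[simp] lemma sQ_imJ : sQ.imJ = 0 := rfl
@[simp] lemma sQ_imK : sQ.imK = 0 := rfl
@[simp] lemma siQ_re : siQ.re = 0 := rfl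
@[simp] lemma siQ_imI : siQ.imI = sR := rfl
@[simp] lemma siQ_imJ : siQ.imJ = 0 := rfl
@[simp] lemma siQ_imK : siQ.imK = 0 := rfl

lemma sR_sq : sR * sR = 1/2 := by
  rw [sR, ← mul_inv, Real.mul_self_sqrt (by norm_num)]
  norm_num

-- case 1 matrices
def jm1 : M3H := Matrix.diagonal ![1, qj, 1]
def jm1i : M3H := Matrix.diagonal ![1, -qj, 1]

lemma jm1_mul_jm1i : jm1 * jm1i = 1 := by
  unfold jm1 jm1i
  rw [Matrix.diagonal_mul_diagonal]
  have : (fun i => ![1, qj, 1] i * ![1, -qj, 1] i) = fun _ => (1 : Quaternion ℝ) := by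
    funext i; fin_cases i <;> simp <;> ext <;>
      simp [Quaternion.re_mul, Quaternion.imI_mul, Quaternion.imJ_mul, Quaternion.imK_mul]
  rw [this, Matrix.diagonal_one]
lemma jm1i_mul_jm1 : jm1i * jm1 = 1 := by
  unfold jm1 jm1i
  rw [Matrix.diagonal_mul_diagonal]
  have : (fun i => ![1, -qj, 1] i * ![1, qj, 1] i) = fun _ => (1 : Quaternion ℝ) := by
    funext i; fin_cases i <;> simp <;> ext <;>
      simp [Quaternion.re_mul, Quaternion.imI_mul, Quaternion.imJ_mul, Quaternion.imK_mul]
  rw [this, Matrix.diagonal_one]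

def t1v : Fin 3 ⊕ Fin 3 → ℂ := fun p => if p = Sum.inl 1 then -1 else 1

lemma detH_jm1 : detH jm1 = 1 := by
  have hΦ : Phi jm1 = (Matrix.diagonal t1v).submatrix
      (Equiv.swap (Sum.inl 1) (Sum.inr 1)) id := by
    ext p q
    rcases p with p | p <;> rcases q with q | q <;> fin_cases p <;> fin_cases q <;>
      simp [Phi, jm1, t1v, Matrix.fromBlocks, Matrix.diagonal, Equiv.swap_apply_def,
        Complex.ext_iff]
  rw [detH, hΦ, Matrix.det_permute, Matrix.det_diagonal, Fintype.prod_sum_type]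
  simp [t1v, Fin.prod_univ_three, Equiv.Perm.sign_swap]
def u1 : M3H := !![sQ, siQ, 0; siQ, sQ, 0; 0, 0, 1]
def u1i : M3H := !![sQ, -siQ, 0; -siQ, sQ, 0; 0, 0, 1]

lemma quat_ext_simp : True := trivial

lemma u1_mul_u1i : u1 * u1i = 1 := by
  refine Matrix.ext fun i j => ?_
  fin_cases i <;> fin_cases j <;>
    simp [u1, u1i, Matrix.mul_apply, Matrix.vecHead, Matrix.vecTail, Fin.sum_univ_three, Matrix.one_apply,
      Quaternion.ext_iff, Quaternion.re_mul, Quaternion.imI_mul, Quaternion.imJ_mul,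
      Quaternion.imK_mul, sR_sq] <;>
    nlinarith [sR_sq]

lemma u1i_mul_u1 : u1i * u1 = 1 := by
  refine Matrix.ext fun i j => ?_
  fin_cases i <;> fin_cases j <;>
    simp [u1, u1i, Matrix.mul_apply, Matrix.vecHead, Matrix.vecTail, Fin.sum_univ_three, Matrix.one_apply,
      Quaternion.ext_iff, Quaternion.re_mul, Quaternion.imI_mul, Quaternion.imJ_mul,
      Quaternion.imK_mul, sR_sq] <;>
    nlinarith [sR_sq]

lemma detH_u1 : detH u1 = 1 := by
  have h2 : u1.map q2 = 0 := by
    refine Matrix.ext fun i j => ?_; fin_cases i <;> fin_cases j <;> simp [u1, Matrix.vecHead, Matrix.vecTail, Complex.ext_iff]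
  have h3 : (u1.map fun x => star (q2 x)) = 0 := by
    refine Matrix.ext fun i j => ?_; fin_cases i <;> fin_cases j <;> simp [u1, Matrix.vecHead, Matrix.vecTail, Complex.ext_iff]
  have h1 : u1.map q1 = !![(sR:ℂ), sR*Complex.I, 0; sR*Complex.I, sR, 0; 0,0,1] := by
    refine Matrix.ext fun i j => ?_; fin_cases i <;> fin_cases j <;> simp [u1, Matrix.vecHead, Matrix.vecTail, Complex.ext_iff]
  have h4 : (u1.map fun x => star (q1 x))
      = !![(sR:ℂ), -(sR*Complex.I), 0; -(sR*Complex.I), sR, 0; 0,0,1] := by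
    refine Matrix.ext fun i j => ?_; fin_cases i <;> fin_cases j <;> simp [u1, Matrix.vecHead, Matrix.vecTail, Complex.ext_iff]
  rw [detH, Phi, h1, h2, h3, h4, neg_zero, Matrix.det_fromBlocks_zero₂₁,
    Matrix.det_fin_three, Matrix.det_fin_three]
  simp [Complex.ext_iff, Complex.mul_re, Complex.mul_im]
  nlinarith [sR_sq]
def Rr1 (a : ℝ) : Matrix (Fin 3) (Fin 3) ℝ :=
  !![Real.cos a, Real.sin a, 0; -Real.sin a, Real.cos a, 0; 0, 0, 1]

def rm1 (a : ℝ) : M3H := (Rr1 a).map (fun r => (r : Quaternion ℝ))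

lemma isReal_rm1 (a : ℝ) : IsRealMatrix (rm1 a) := fun i j => ⟨Rr1 a i j, rfl⟩

lemma jm1_conj (a : ℝ) : jm1 * eD a a 0 = eD a (-a) 0 * jm1 := by
  refine Matrix.ext fun i j => ?_
  fin_cases i <;> fin_cases j <;>
    simp [jm1, eD, Matrix.mul_apply, Matrix.vecHead, Matrix.vecTail, Fin.sum_univ_three, Matrix.diagonal,
      Quaternion.ext_iff, Quaternion.re_mul, Quaternion.imI_mul, Quaternion.imJ_mul,
      Quaternion.imK_mul]

lemma u1_conj (a : ℝ) : u1 * eD a (-a) 0 = rm1 a * u1 := by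
  refine Matrix.ext fun i j => ?_
  fin_cases i <;> fin_cases j <;>
    simp [u1, rm1, Rr1, eD, Matrix.mul_apply, Matrix.map_apply,
      Fin.sum_univ_three, Matrix.diagonal,
      Quaternion.ext_iff, Quaternion.re_mul, Quaternion.imI_mul, Quaternion.imJ_mul,
      Quaternion.imK_mul] <;>
    ((try ring); (try exact ⟨trivial, trivial⟩); (try simp [Matrix.vecHead, Matrix.vecTail]))

lemma isSimple_E1 (a : ℝ) : IsSimple (E a a 0) := by
  refine ⟨mkSL u1 u1i u1_mul_u1i u1i_mul_u1 detH_u1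
    * mkSL jm1 jm1i jm1_mul_jm1i jm1i_mul_jm1 detH_jm1, ?_⟩
  have hm : mat (mkSL u1 u1i u1_mul_u1i u1i_mul_u1 detH_u1
      * mkSL jm1 jm1i jm1_mul_jm1i jm1i_mul_jm1 detH_jm1 * E a a 0
      * (mkSL u1 u1i u1_mul_u1i u1i_mul_u1 detH_u1
        * mkSL jm1 jm1i jm1_mul_jm1i jm1i_mul_jm1 detH_jm1)⁻¹)
      = u1 * jm1 * eD a a 0 * (jm1i * u1i) := rfl
  rw [hm]
  have : u1 * jm1 * eD a a 0 * (jm1i * u1i) = rm1 a := by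
    simp only [mul_assoc]
    rw [← mul_assoc jm1 (eD a a 0), jm1_conj]
    simp only [mul_assoc]
    rw [← mul_assoc jm1 jm1i, jm1_mul_jm1i, one_mul,
      ← mul_assoc u1 (eD a (-a) 0), u1_conj]
    simp only [mul_assoc]
    rw [u1_mul_u1i, mul_one]
  rw [this]
  exact isReal_rm1 a
def jm2 : M3H := Matrix.diagonal ![1, 1, qj]
def jm2i : M3H := Matrix.diagonal ![1, 1, -qj]

lemma jm2_mul_jm2i : jm2 * jm2i = 1 := by
  unfold jm2 jm2i
  rw [Matrix.diagonal_mul_diagonal]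
  have : (fun i => ![1, 1, qj] i * ![1, 1, -qj] i) = fun _ => (1 : Quaternion ℝ) := by
    funext i; fin_cases i <;> simp <;> ext <;>
      simp [Quaternion.re_mul, Quaternion.imI_mul, Quaternion.imJ_mul, Quaternion.imK_mul]
  rw [this, Matrix.diagonal_one]

lemma jm2i_mul_jm2 : jm2i * jm2 = 1 := by
  unfold jm2 jm2i
  rw [Matrix.diagonal_mul_diagonal]
  have : (fun i => ![1, 1, -qj] i * ![1, 1, qj] i) = fun _ => (1 : Quaternion ℝ) := by
    funext i; fin_cases i <;> simp <;> ext <;>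
      simp [Quaternion.re_mul, Quaternion.imI_mul, Quaternion.imJ_mul, Quaternion.imK_mul]
  rw [this, Matrix.diagonal_one]

def t2v : Fin 3 ⊕ Fin 3 → ℂ := fun p => if p = Sum.inl 2 then -1 else 1

lemma detH_jm2 : detH jm2 = 1 := by
  have hΦ : Phi jm2 = (Matrix.diagonal t2v).submatrix
      (Equiv.swap (Sum.inl 2) (Sum.inr 2)) id := by
    ext p q
    rcases p with p | p <;> rcases q with q | q <;> fin_cases p <;> fin_cases q <;>
      simp [Phi, jm2, t2v, Matrix.fromBlocks, Matrix.diagonal, Equiv.swap_apply_def,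
        Complex.ext_iff]
  rw [detH, hΦ, Matrix.det_permute, Matrix.det_diagonal, Fintype.prod_sum_type]
  simp [t2v, Fin.prod_univ_three, Equiv.Perm.sign_swap]

-- case 2
def u2 : M3H := !![1, 0, 0; 0, sQ, siQ; 0, siQ, sQ]
def u2i : M3H := !![1, 0, 0; 0, sQ, -siQ; 0, -siQ, sQ]

lemma u2_mul_u2i : u2 * u2i = 1 := by
  refine Matrix.ext fun i j => ?_
  fin_cases i <;> fin_cases j <;>
    simp [u2, u2i, Matrix.mul_apply, Matrix.vecHead, Matrix.vecTail, Fin.sum_univ_three, Matrix.one_apply,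
      Quaternion.ext_iff, Quaternion.re_mul, Quaternion.imI_mul, Quaternion.imJ_mul,
      Quaternion.imK_mul, sR_sq] <;>
    nlinarith [sR_sq]

lemma u2i_mul_u2 : u2i * u2 = 1 := by
  refine Matrix.ext fun i j => ?_
  fin_cases i <;> fin_cases j <;>
    simp [u2, u2i, Matrix.mul_apply, Matrix.vecHead, Matrix.vecTail, Fin.sum_univ_three, Matrix.one_apply,
      Quaternion.ext_iff, Quaternion.re_mul, Quaternion.imI_mul, Quaternion.imJ_mul,
      Quaternion.imK_mul, sR_sq] <;>
    nlinarith [sR_sq]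

lemma detH_u2 : detH u2 = 1 := by
  have h2 : u2.map q2 = 0 := by
    refine Matrix.ext fun i j => ?_; fin_cases i <;> fin_cases j <;> simp [u2, Matrix.vecHead, Matrix.vecTail, Complex.ext_iff]
  have h3 : (u2.map fun x => star (q2 x)) = 0 := by
    refine Matrix.ext fun i j => ?_; fin_cases i <;> fin_cases j <;> simp [u2, Matrix.vecHead, Matrix.vecTail, Complex.ext_iff]
  have h1 : u2.map q1 = !![1, 0, 0; 0, (sR:ℂ), sR*Complex.I; 0, sR*Complex.I, sR] := by
    refine Matrix.ext fun i j => ?_; fin_cases i <;> fin_cases j <;> simp [u2, Matrix.vecHead, Matrix.vecTail, Complex.ext_iff]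
  have h4 : (u2.map fun x => star (q1 x))
      = !![1, 0, 0; 0, (sR:ℂ), -(sR*Complex.I); 0, -(sR*Complex.I), sR] := by
    refine Matrix.ext fun i j => ?_; fin_cases i <;> fin_cases j <;> simp [u2, Matrix.vecHead, Matrix.vecTail, Complex.ext_iff]
  rw [detH, Phi, h1, h2, h3, h4, neg_zero, Matrix.det_fromBlocks_zero₂₁,
    Matrix.det_fin_three, Matrix.det_fin_three]
  simp [Complex.ext_iff, Complex.mul_re, Complex.mul_im]
  nlinarith [sR_sq]

def Rr2 (b : ℝ) : Matrix (Fin 3) (Fin 3) ℝ :=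
  !![1, 0, 0; 0, Real.cos b, Real.sin b; 0, -Real.sin b, Real.cos b]

def rm2 (b : ℝ) : M3H := (Rr2 b).map (fun r => (r : Quaternion ℝ))

lemma isReal_rm2 (b : ℝ) : IsRealMatrix (rm2 b) := fun i j => ⟨Rr2 b i j, rfl⟩

lemma jm2_conj2 (b : ℝ) : jm2 * eD 0 b b = eD 0 b (-b) * jm2 := by
  refine Matrix.ext fun i j => ?_
  fin_cases i <;> fin_cases j <;>
    simp [jm2, eD, Matrix.mul_apply, Matrix.vecHead, Matrix.vecTail, Fin.sum_univ_three, Matrix.diagonal,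
      Quaternion.ext_iff, Quaternion.re_mul, Quaternion.imI_mul, Quaternion.imJ_mul,
      Quaternion.imK_mul]

lemma u2_conj (b : ℝ) : u2 * eD 0 b (-b) = rm2 b * u2 := by
  refine Matrix.ext fun i j => ?_
  fin_cases i <;> fin_cases j <;>
    simp [u2, rm2, Rr2, eD, Matrix.mul_apply, Matrix.map_apply,
      Fin.sum_univ_three, Matrix.diagonal,
      Quaternion.ext_iff, Quaternion.re_mul, Quaternion.imI_mul, Quaternion.imJ_mul,
      Quaternion.imK_mul] <;>
    ((try ring); (try exact ⟨trivial, trivial⟩); (try simp [Matrix.vecHead, Matrix.vecTail]))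

lemma isSimple_E2 (b : ℝ) : IsSimple (E 0 b b) := by
  refine ⟨mkSL u2 u2i u2_mul_u2i u2i_mul_u2 detH_u2
    * mkSL jm2 jm2i jm2_mul_jm2i jm2i_mul_jm2 detH_jm2, ?_⟩
  have hm : mat (mkSL u2 u2i u2_mul_u2i u2i_mul_u2 detH_u2
      * mkSL jm2 jm2i jm2_mul_jm2i jm2i_mul_jm2 detH_jm2 * E 0 b b
      * (mkSL u2 u2i u2_mul_u2i u2i_mul_u2 detH_u2
        * mkSL jm2 jm2i jm2_mul_jm2i jm2i_mul_jm2 detH_jm2)⁻¹)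
      = u2 * jm2 * eD 0 b b * (jm2i * u2i) := rfl
  rw [hm]
  have : u2 * jm2 * eD 0 b b * (jm2i * u2i) = rm2 b := by
    simp only [mul_assoc]
    rw [← mul_assoc jm2 (eD 0 b b), jm2_conj2]
    simp only [mul_assoc]
    rw [← mul_assoc jm2 jm2i, jm2_mul_jm2i, one_mul,
      ← mul_assoc u2 (eD 0 b (-b)), u2_conj]
    simp only [mul_assoc]
    rw [u2_mul_u2i, mul_one]
  rw [this]
  exact isReal_rm2 b

-- case 3
def u3 : M3H := !![sQ, 0, siQ; 0, 1, 0; siQ, 0, sQ]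
def u3i : M3H := !![sQ, 0, -siQ; 0, 1, 0; -siQ, 0, sQ]

lemma u3_mul_u3i : u3 * u3i = 1 := by
  refine Matrix.ext fun i j => ?_
  fin_cases i <;> fin_cases j <;>
    simp [u3, u3i, Matrix.mul_apply, Matrix.vecHead, Matrix.vecTail, Fin.sum_univ_three, Matrix.one_apply,
      Quaternion.ext_iff, Quaternion.re_mul, Quaternion.imI_mul, Quaternion.imJ_mul,
      Quaternion.imK_mul, sR_sq] <;>
    nlinarith [sR_sq]

lemma u3i_mul_u3 : u3i * u3 = 1 := by
  refine Matrix.ext fun i j => ?_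
  fin_cases i <;> fin_cases j <;>
    simp [u3, u3i, Matrix.mul_apply, Matrix.vecHead, Matrix.vecTail, Fin.sum_univ_three, Matrix.one_apply,
      Quaternion.ext_iff, Quaternion.re_mul, Quaternion.imI_mul, Quaternion.imJ_mul,
      Quaternion.imK_mul, sR_sq] <;>
    nlinarith [sR_sq]

lemma detH_u3 : detH u3 = 1 := by
  have h2 : u3.map q2 = 0 := by
    refine Matrix.ext fun i j => ?_; fin_cases i <;> fin_cases j <;> simp [u3, Matrix.vecHead, Matrix.vecTail, Complex.ext_iff]
  have h3 : (u3.map fun x => star (q2 x)) = 0 := by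
    refine Matrix.ext fun i j => ?_; fin_cases i <;> fin_cases j <;> simp [u3, Matrix.vecHead, Matrix.vecTail, Complex.ext_iff]
  have h1 : u3.map q1 = !![(sR:ℂ), 0, sR*Complex.I; 0, 1, 0; sR*Complex.I, 0, sR] := by
    refine Matrix.ext fun i j => ?_; fin_cases i <;> fin_cases j <;> simp [u3, Matrix.vecHead, Matrix.vecTail, Complex.ext_iff]
  have h4 : (u3.map fun x => star (q1 x))
      = !![(sR:ℂ), 0, -(sR*Complex.I); 0, 1, 0; -(sR*Complex.I), 0, sR] := by
    refine Matrix.ext fun i j => ?_; fin_cases i <;> fin_cases j <;> simp [u3, Matrix.vecHead, Matrix.vecTail, Complex.ext_iff]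
  rw [detH, Phi, h1, h2, h3, h4, neg_zero, Matrix.det_fromBlocks_zero₂₁,
    Matrix.det_fin_three, Matrix.det_fin_three]
  simp [Complex.ext_iff, Complex.mul_re, Complex.mul_im]
  nlinarith [sR_sq]

def Rr3 (c : ℝ) : Matrix (Fin 3) (Fin 3) ℝ :=
  !![Real.cos c, 0, Real.sin c; 0, 1, 0; -Real.sin c, 0, Real.cos c]

def rm3 (c : ℝ) : M3H := (Rr3 c).map (fun r => (r : Quaternion ℝ))

lemma isReal_rm3 (c : ℝ) : IsRealMatrix (rm3 c) := fun i j => ⟨Rr3 c i j, rfl⟩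

lemma jm2_conj3 (c : ℝ) : jm2 * eD c 0 c = eD c 0 (-c) * jm2 := by
  refine Matrix.ext fun i j => ?_
  fin_cases i <;> fin_cases j <;>
    simp [jm2, eD, Matrix.mul_apply, Matrix.vecHead, Matrix.vecTail, Fin.sum_univ_three, Matrix.diagonal,
      Quaternion.ext_iff, Quaternion.re_mul, Quaternion.imI_mul, Quaternion.imJ_mul,
      Quaternion.imK_mul]

lemma u3_conj (c : ℝ) : u3 * eD c 0 (-c) = rm3 c * u3 := by
  refine Matrix.ext fun i j => ?_
  fin_cases i <;> fin_cases j <;>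
    simp [u3, rm3, Rr3, eD, Matrix.mul_apply, Matrix.map_apply,
      Fin.sum_univ_three, Matrix.diagonal,
      Quaternion.ext_iff, Quaternion.re_mul, Quaternion.imI_mul, Quaternion.imJ_mul,
      Quaternion.imK_mul] <;>
    ((try ring); (try exact ⟨trivial, trivial⟩); (try simp [Matrix.vecHead, Matrix.vecTail]))

lemma isSimple_E3 (c : ℝ) : IsSimple (E c 0 c) := by
  refine ⟨mkSL u3 u3i u3_mul_u3i u3i_mul_u3 detH_u3
    * mkSL jm2 jm2i jm2_mul_jm2i jm2i_mul_jm2 detH_jm2, ?_⟩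
  have hm : mat (mkSL u3 u3i u3_mul_u3i u3i_mul_u3 detH_u3
      * mkSL jm2 jm2i jm2_mul_jm2i jm2i_mul_jm2 detH_jm2 * E c 0 c
      * (mkSL u3 u3i u3_mul_u3i u3i_mul_u3 detH_u3
        * mkSL jm2 jm2i jm2_mul_jm2i jm2i_mul_jm2 detH_jm2)⁻¹)
      = u3 * jm2 * eD c 0 c * (jm2i * u3i) := rfl
  rw [hm]
  have : u3 * jm2 * eD c 0 c * (jm2i * u3i) = rm3 c := by
    simp only [mul_assoc]
    rw [← mul_assoc jm2 (eD c 0 c), jm2_conj3]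
    simp only [mul_assoc]
    rw [← mul_assoc jm2 jm2i, jm2_mul_jm2i, one_mul,
      ← mul_assoc u3 (eD c 0 (-c)), u3_conj]
    simp only [mul_assoc]
    rw [u3_mul_u3i, mul_one]
  rw [this]
  exact isReal_rm3 c
/-- A diagonalizable elliptic element `diag(e^{iθ}, e^{iφ}, e^{iψ})` of `SL(3,ℍ)` is a
product of three simple matrices. -/
theorem sl3h_elliptic_diagonal_product_of_three_simple (A : SL3H)
    (hA : ∃ h : SL3H, ∃ θ φ ψ : ℝ, θ ∈ Set.Icc 0 Real.pi ∧ φ ∈ Set.Icc 0 Real.pi ∧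
      ψ ∈ Set.Icc 0 Real.pi ∧ mat (h * A * h⁻¹) = Matrix.diagonal ![eI θ, eI φ, eI ψ]) :
    ∃ g1 g2 g3 : SL3H, IsSimple g1 ∧ IsSimple g2 ∧ IsSimple g3 ∧ A = g1 * g2 * g3 := by
  obtain ⟨h, θ, φ, ψ, -, -, -, hmat⟩ := hA
  have hE : h * A * h⁻¹ = E θ φ ψ := by
    apply Subtype.ext; apply Units.ext
    exact hmat.trans rfl
  set a := (θ + φ - ψ)/2 with ha
  set b := (φ + ψ - θ)/2 with hb
  set c := (θ + ψ - φ)/2 with hc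
  have hdec : E θ φ ψ = E a a 0 * E 0 b b * E c 0 c := by
    rw [E_mul, E_mul, show a + 0 + c = θ by rw [ha, hc]; ring,
      show a + b + 0 = φ by rw [ha, hb]; ring, show 0 + b + c = ψ by rw [hb, hc]; ring]
  refine ⟨h⁻¹ * E a a 0 * h⁻¹⁻¹, h⁻¹ * E 0 b b * h⁻¹⁻¹, h⁻¹ * E c 0 c * h⁻¹⁻¹,
    isSimple_conj _ _ (isSimple_E1 a), isSimple_conj _ _ (isSimple_E2 b),
    isSimple_conj _ _ (isSimple_E3 c), ?_⟩
  have hA' : A = h⁻¹ * E θ φ ψ * h := by rw [← hE]; group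
  rw [hA', hdec]; group
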